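/- arXiv:1901.04709 — 2 statements merged into one kernel-verified Lean document; each statement's English description precedes it below -/
import Mathlib

section
/- In every infinite improvement path of the ring game G, if a player i is selected only finitely often, then its successor on the ring (player i+1, with the successor of player n being player 1) is also selected only finitely often. -/
/-!
Game-theoretic formalization of Dijkstra's self-stabilization (Apt & Shoja).
Players are `Fin n`; a joint strategy is `s : Fin n → C`.
-/

/-- Payoff in the ring game `G` on the directed ring `0 → 1 → ⋯ → n-1 → 0`:
player `0` plays the anti-coordination game with respect to its predecessor
(player `n-1`, i.e. `0 - 1` in `Fin n`); every other player `i` plays the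
coordination game with respect to its predecessor `i - 1`. -/
def ringPayoff {n : ℕ} [NeZero n] {C : Type*} [DecidableEq C]
    (s : Fin n → C) (i : Fin n) : ℕ :=
  if i = 0 then (if s i = s (i - 1) then 0 else 1)
  else (if s i = s (i - 1) then 1 else 0)

/-- `s i` is a best response of player `i` to the strategies of the others in `s`. -/
def BestResponse {n : ℕ} {C : Type*}
    (p : (Fin n → C) → Fin n → ℕ) (s : Fin n → C) (i : Fin n) : Prop :=
  ∀ c : C, p (Function.update s i c) i ≤ p s i

/-- An improvement step from `s` to `s'` in which player `i` is selected:
only player `i` changes its strategy and its payoff strictly increases. -/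
def StepAt {n : ℕ} {C : Type*}
    (p : (Fin n → C) → Fin n → ℕ) (i : Fin n) (s s' : Fin n → C) : Prop :=
  (∀ j, j ≠ i → s' j = s j) ∧ p s i < p s' i

/-- A joint strategy is legitimate if exactly one player does not play a best response. -/
def Legitimate {n : ℕ} {C : Type*}
    (p : (Fin n → C) → Fin n → ℕ) (s : Fin n → C) : Prop :=
  ∃! i : Fin n, ¬ BestResponse p s i

lemma ringPayoff_le_one {n : ℕ} [NeZero n] {C : Type*} [DecidableEq C]
    (s : Fin n → C) (i : Fin n) : ringPayoff s i ≤ 1 := by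
  unfold ringPayoff; split <;> split <;> omega

lemma ringPayoff_congr {n : ℕ} [NeZero n] {C : Type*} [DecidableEq C]
    {s t : Fin n → C} {i : Fin n} (h1 : s i = t i) (h2 : s (i-1) = t (i-1)) :
    ringPayoff s i = ringPayoff t i := by
  unfold ringPayoff; rw [h1, h2]

/-- In every infinite improvement path of the ring game `G`, if a
player `i` is selected only finitely often, then its successor on the ring
(player `i + 1` in `Fin n`, so the successor of the last player is player `0`)
is also selected only finitely often. -/
theorem ring_game_successor_selected_finitely_often
    (n : ℕ) [NeZero n] (hn : 2 ≤ n)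
    (C : Type*) [Fintype C] [DecidableEq C] (hC : 2 ≤ Fintype.card C)
    (σ : ℕ → Fin n → C) (sel : ℕ → Fin n)
    (hpath : ∀ k : ℕ, StepAt (ringPayoff (n := n) (C := C)) (sel k) (σ k) (σ (k + 1)))
    (i : Fin n) (hfin : ∃ K : ℕ, ∀ m, K ≤ m → sel m ≠ i) :
    ∃ K : ℕ, ∀ m, K ≤ m → sel m ≠ i + 1 := by
  obtain ⟨K, hK⟩ := hfin
  by_cases h : ∃ m, K ≤ m ∧ sel m = i + 1
  · obtain ⟨m, hmK, hm⟩ := h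
    refine ⟨m + 1, ?_⟩
    have hconst : ∀ k, K ≤ k → σ (k+1) i = σ k i := fun k hk =>
      (hpath k).1 i (Ne.symm (hK k hk))
    have hp1 : ∀ k, m + 1 ≤ k → ringPayoff (σ k) (i+1) = 1 := by
      intro k hk
      induction k with
      | zero => omega
      | succ k ih =>
        rcases Nat.lt_or_ge (m+1) (k+1) with hlt | hge
        · have ihk := ih (by omega)
          by_cases hs : sel k = i + 1
          · exfalso
            have h2 := (hpath k).2
            rw [hs] at h2
            have h1 := ringPayoff_le_one (σ (k+1)) (i+1)
            omega
          · have e1 : σ (k+1) (i+1) = σ k (i+1) := (hpath k).1 _ (Ne.symm hs)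
            have e2 : σ (k+1) (i+1-1) = σ k (i+1-1) := by
              simp only [add_sub_cancel_right]
              exact hconst k (by omega)
            rw [ringPayoff_congr e1 e2]; exact ihk
        · have hkm : k = m := by omega
          subst hkm
          have h2 := (hpath k).2
          rw [hm] at h2
          have h1 := ringPayoff_le_one (σ (k+1)) (i+1)
          omega
    intro m' hm' hs
    have h2 := (hpath m').2
    rw [hs] at h2
    have h3 := hp1 m' hm'
    have h1 := ringPayoff_le_one (σ (m'+1)) (i+1)
    omega
  · exact ⟨K, fun m hm hs => h ⟨m, hm, hs⟩⟩
end

section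
/- In the ring game G with n > 3 players, there exists an infinite improvement path that contains no legitimate joint strategy; hence G does not admit self-stabilization. -/
/-!
With two colours a joint strategy is a bit vector `s`, and the players that do not play a best
response are Dijkstra's privileged players, here called tokens: player `i ≠ 0` holds one iff
`s i ≠ s (i - 1)`, player `0` iff `s 0 = s (n - 1)`. Flipping the bit of a token holder `i` is an
improvement step and toggles the tokens of `i` and `i + 1`, so when `i + 1` holds none it moves
the token one place forward. Start with tokens at players `0, 1, 2` and move the front token, then
the middle one, then the back one, and repeat: every three steps the block advances by one
place. It never spans more than four consecutive players, so for `n > 3` the tokens stay distinct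
and always have room to move. Every joint strategy on this infinite path has three tokens, so
none is legitimate.
-/

open Fin.NatCast Function Set
open scoped symmDiff

lemma Fin.natCast_injOn_Ico {m n : ℕ} [NeZero n] (hmn : m ≤ n) (a : ℕ) :
    InjOn (Nat.cast : ℕ → Fin n) (Ico a (a + m)) := by
  intro x hx y hy hxy
  have hmod : x ≡ y [MOD n] := congrArg Fin.val hxy
  refine hmod.eq_of_abs_lt (abs_sub_lt_iff.mpr ⟨?_, ?_⟩) <;>
    simp only [mem_Ico] at hx hy <;> omega

lemma Fin.sub_one_ne_self {n : ℕ} [NeZero n] (hn : 1 < n) (i : Fin n) : i - 1 ≠ i := by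
  simp [sub_eq_self, Fin.ext_iff, Nat.mod_eq_of_lt hn]

lemma Set.symmDiff_pair_of_mem_of_notMem {α : Type*} {T : Set α} {x y : α} (hx : x ∈ T)
    (hy : y ∉ T) : T ∆ {x, y} = insert y (T \ {x}) := by
  ext z
  simp only [mem_symmDiff, mem_insert_iff, mem_singleton_iff, mem_sdiff]
  constructor
  · rintro (⟨hz, hne⟩ | ⟨rfl | rfl, hz⟩)
    · exact Or.inr ⟨hz, fun h => hne (Or.inl h)⟩
    · exact absurd hx hz
    · exact Or.inl rfl
  · rintro (rfl | ⟨hz, hne⟩)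
    · exact Or.inr ⟨Or.inr rfl, hy⟩
    · exact Or.inl ⟨hz, by rintro (rfl | rfl) <;> contradiction⟩

lemma Set.range_update_of_injective {ι α : Type*} [DecidableEq ι] {p : ι → α}
    (hp : Injective p) (j : ι) (y : α) : range (update p j y) = insert y (range p \ {p j}) := by
  ext z
  simp only [mem_range, mem_insert_iff, mem_sdiff, mem_singleton_iff]
  constructor
  · rintro ⟨i, rfl⟩
    by_cases hij : i = j
    · simp [hij]
    · exact Or.inr ⟨⟨i, (update_of_ne hij _ _).symm⟩, by simpa [update_of_ne hij] using hp.ne hij⟩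
  · rintro (rfl | ⟨⟨i, rfl⟩, hne⟩)
    · exact ⟨j, update_self _ _ _⟩
    · exact ⟨i, update_of_ne (fun hij => hne (by rw [hij])) _ _⟩

lemma not_legitimate_of_ne {n : ℕ} {C : Type*} {p : (Fin n → C) → Fin n → ℕ} {s : Fin n → C}
    {i j : Fin n} (hij : i ≠ j) (hi : ¬ BestResponse p s i) (hj : ¬ BestResponse p s j) :
    ¬ Legitimate p s :=
  fun ⟨_, _, huniq⟩ => hij ((huniq i hi).trans (huniq j hj).symm)

namespace RingGame

variable {n : ℕ} [NeZero n]

def tokens (s : Fin n → Bool) : Set (Fin n) := {i | s i = s (i - 1) ↔ i = 0}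

def toggle (s : Fin n → Bool) (i : Fin n) : Fin n → Bool := update s i (!s i)

lemma tokens_const (b : Bool) : tokens (fun _ : Fin n => b) = {0} := by
  ext i
  simp [tokens]

lemma tokens_toggle (hn : 1 < n) (s : Fin n → Bool) (i : Fin n) :
    tokens (toggle s i) = tokens s ∆ {i, i + 1} := by
  ext j
  simp only [tokens, toggle, mem_symmDiff, mem_ofPred_eq, mem_insert_iff, mem_singleton_iff]
  by_cases hji : j = i
  · subst hji
    rw [update_self, update_of_ne (Fin.sub_one_ne_self hn j), Bool.not_eq_eq_eq_not,
      Bool.eq_not_iff]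
    simp [not_iff]
  by_cases hji' : j = i + 1
  · subst hji'
    rw [add_sub_cancel_right, update_self, update_of_ne hji, Bool.eq_not_iff]
    simp [hji, not_iff]
  · have hpred : j - 1 ≠ i := fun h => hji' (sub_eq_iff_eq_add.mp h)
    simp [hji, hji', update_of_ne hpred]

lemma tokens_toggle_of_eq_range (hn : 1 < n) {ι : Type*} [DecidableEq ι] {s : Fin n → Bool}
    {p : ι → Fin n} (hs : tokens s = range p) (hp : Injective p) (j : ι)
    (hfree : p j + 1 ∉ range p) : tokens (toggle s (p j)) = range (update p j (p j + 1)) := by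
  rw [tokens_toggle hn, hs, symmDiff_pair_of_mem_of_notMem (mem_range_self j) hfree,
    range_update_of_injective hp]

-- `(k + j) / 3` counts the moves of token `j` among the first `k`: step `k` moves token `mover k`.
def tokenPos (k : ℕ) (j : Fin 3) : ℕ := j + (k + j) / 3

def mover (k : ℕ) : Fin 3 := ⟨2 - k % 3, by omega⟩

lemma tokenPos_succ (k : ℕ) :
    tokenPos (k + 1) = update (tokenPos k) (mover k) (tokenPos k (mover k) + 1) := by
  funext j
  have hj := j.isLt
  rw [update_apply]
  split_ifs with h
  · subst h
    simp only [tokenPos, mover]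
    omega
  · have h' : j.val ≠ 2 - k % 3 := fun h' => h (Fin.ext h')
    simp only [tokenPos]
    omega

lemma strictMono_tokenPos (k : ℕ) : StrictMono (tokenPos k) := by
  intro a b hab
  rw [Fin.lt_def] at hab
  simp only [tokenPos]
  omega

lemma tokenPos_mem_Ico (k : ℕ) (j : Fin 3) : tokenPos k j ∈ Ico (k / 3) (k / 3 + 4) := by
  have hj := j.isLt
  simp only [tokenPos, mem_Ico]
  omega

lemma tokenPos_mover_add_one_mem_Ico (k : ℕ) :
    tokenPos k (mover k) + 1 ∈ Ico (k / 3) (k / 3 + 4) := by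
  simp only [tokenPos, mover, mem_Ico]
  omega

lemma tokenPos_mover_add_one_ne (k : ℕ) (j : Fin 3) : tokenPos k (mover k) + 1 ≠ tokenPos k j := by
  have hj := j.isLt
  simp only [tokenPos, mover]
  omega

def tokenPosFin (n : ℕ) [NeZero n] (k : ℕ) : Fin 3 → Fin n := Nat.cast ∘ tokenPos k

lemma tokenPosFin_succ (k : ℕ) : tokenPosFin n (k + 1) =
    update (tokenPosFin n k) (mover k) (tokenPosFin n k (mover k) + 1) := by
  rw [tokenPosFin, tokenPos_succ, comp_update, Nat.cast_succ]
  rfl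

lemma injective_tokenPosFin (hn : 3 < n) (k : ℕ) : Injective (tokenPosFin n k) :=
  fun a b h => (strictMono_tokenPos k).injective
    (Fin.natCast_injOn_Ico hn (k / 3) (tokenPos_mem_Ico k a) (tokenPos_mem_Ico k b) h)

lemma tokenPosFin_mover_add_one_notMem (hn : 3 < n) (k : ℕ) :
    tokenPosFin n k (mover k) + 1 ∉ range (tokenPosFin n k) := by
  rintro ⟨j, hj⟩
  refine tokenPos_mover_add_one_ne k j <| Fin.natCast_injOn_Ico hn (k / 3)
    (tokenPos_mover_add_one_mem_Ico k) (tokenPos_mem_Ico k j) ?_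
  rw [Nat.cast_succ]
  exact hj.symm

def path (n : ℕ) [NeZero n] : ℕ → Fin n → Bool
  | 0 => toggle (fun _ => false) 1
  | k + 1 => toggle (path n k) (tokenPosFin n k (mover k))

lemma tokens_path_zero (hn : 3 < n) : tokens (path n 0) = range (tokenPosFin n 0) := by
  have h01 : (0 : Fin n) ≠ 1 := by simp [Fin.ext_iff, Nat.mod_eq_of_lt (by omega : 1 < n)]
  have h02 : (0 : Fin n) ≠ 1 + 1 := by
    simp [one_add_one_eq_two, Fin.ext_iff, Nat.mod_eq_of_lt (by omega : 2 < n)]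
  rw [path, tokens_toggle (by omega), tokens_const,
    Disjoint.symmDiff_eq_sup (by simp [h01, h02])]
  ext x
  simp [tokenPosFin, tokenPos, Fin.exists_fin_succ, eq_comm, or_comm, or_left_comm]

lemma tokens_path (hn : 3 < n) : ∀ k, tokens (path n k) = range (tokenPosFin n k)
  | 0 => tokens_path_zero hn
  | k + 1 => by
    rw [path, tokenPosFin_succ]
    exact tokens_toggle_of_eq_range (by omega) (tokens_path hn k) (injective_tokenPosFin hn k)
      (mover k) (tokenPosFin_mover_add_one_notMem hn k)

variable {C : Type*} [DecidableEq C]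

lemma ringPayoff_comp_eq_zero_iff {e : Bool → C} (he : Injective e) (s : Fin n → Bool)
    (i : Fin n) : ringPayoff (e ∘ s) i = 0 ↔ i ∈ tokens s := by
  by_cases h0 : i = 0 <;> simp [ringPayoff, tokens, he.eq_iff, h0]

lemma exists_ringPayoff_update_eq_one [Nontrivial C] (hn : 1 < n) (s : Fin n → C) (i : Fin n) :
    ∃ c, ringPayoff (update s i c) i = 1 := by
  obtain ⟨c, hc⟩ := exists_ne (s (i - 1))
  refine ⟨if i = 0 then c else s (i - 1), ?_⟩
  rw [ringPayoff, update_self, update_of_ne (Fin.sub_one_ne_self hn i)]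
  by_cases h0 : i = 0
  · rw [if_pos h0, if_pos h0, if_neg hc]
  · rw [if_neg h0, if_neg h0, if_pos rfl]

lemma not_bestResponse_of_ringPayoff_eq_zero [Nontrivial C] (hn : 1 < n) {s : Fin n → C}
    {i : Fin n} (h : ringPayoff s i = 0) : ¬ BestResponse ringPayoff s i := by
  obtain ⟨c, hc⟩ := exists_ringPayoff_update_eq_one hn s i
  intro hbr
  simpa [hc, h] using hbr c

lemma not_bestResponse_of_mem_tokens (hn : 1 < n) {e : Bool → C} (he : Injective e)
    {s : Fin n → Bool} {i : Fin n} (hi : i ∈ tokens s) : ¬ BestResponse ringPayoff (e ∘ s) i :=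
  have : Nontrivial C := he.nontrivial
  not_bestResponse_of_ringPayoff_eq_zero hn ((ringPayoff_comp_eq_zero_iff he s i).mpr hi)

lemma stepAt_toggle (hn : 1 < n) {e : Bool → C} (he : Injective e) {s : Fin n → Bool}
    {i : Fin n} (hi : i ∈ tokens s) : StepAt ringPayoff i (e ∘ s) (e ∘ toggle s i) := by
  refine ⟨fun j hj => by simp [toggle, update_of_ne hj], ?_⟩
  have hi' : i ∉ tokens (toggle s i) := by simp [tokens_toggle hn, mem_symmDiff, hi]
  rw [(ringPayoff_comp_eq_zero_iff he s i).mpr hi]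
  exact Nat.pos_of_ne_zero ((ringPayoff_comp_eq_zero_iff he _ i).not.mpr hi')

end RingGame

open RingGame in
/-- In the ring game `G` with `n > 3` players, there exists an infinite
improvement path that contains no legitimate joint strategy; hence `G` does not admit
self-stabilization (i.e. it is not the case that in every improvement path every
player is selected infinitely often and from a certain point on every joint strategy
is legitimate). -/
theorem ring_game_no_self_stabilization_for_more_than_three_players
    (n : ℕ) [NeZero n] (hn : 3 < n)
    (C : Type*) [Fintype C] [DecidableEq C] (hC : 2 ≤ Fintype.card C) :
    (∃ (σ : ℕ → Fin n → C) (sel : ℕ → Fin n),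
        (∀ k : ℕ, StepAt (ringPayoff (n := n) (C := C)) (sel k) (σ k) (σ (k + 1))) ∧
        (∀ m : ℕ, ¬ Legitimate (ringPayoff (n := n) (C := C)) (σ m))) ∧
    ¬ (∀ (σ : ℕ → Fin n → C) (sel : ℕ → Fin n),
        (∀ k : ℕ, StepAt (ringPayoff (n := n) (C := C)) (sel k) (σ k) (σ (k + 1))) →
        ((∀ (i : Fin n) (k : ℕ), ∃ m, k ≤ m ∧ sel m = i) ∧
         (∃ K : ℕ, ∀ m, K ≤ m → Legitimate (ringPayoff (n := n) (C := C)) (σ m)))) := by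
  obtain ⟨e⟩ : Nonempty (Bool ↪ C) := Function.Embedding.nonempty_of_card_le (by simpa using hC)
  have hn1 : 1 < n := by omega
  have mem_tokens (k : ℕ) (j : Fin 3) : tokenPosFin n k j ∈ tokens (path n k) := by
    rw [tokens_path hn]
    exact mem_range_self j
  let σ : ℕ → Fin n → C := fun k => e ∘ path n k
  let sel : ℕ → Fin n := fun k => tokenPosFin n k (mover k)
  have hstep (k : ℕ) : StepAt ringPayoff (sel k) (σ k) (σ (k + 1)) :=
    stepAt_toggle hn1 e.injective (mem_tokens k _)
  have hnl (m : ℕ) : ¬ Legitimate ringPayoff (σ m) :=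
    not_legitimate_of_ne ((injective_tokenPosFin hn m).ne (by decide : (0 : Fin 3) ≠ 1))
      (not_bestResponse_of_mem_tokens hn1 e.injective (mem_tokens m 0))
      (not_bestResponse_of_mem_tokens hn1 e.injective (mem_tokens m 1))
  refine ⟨⟨σ, sel, hstep, hnl⟩, fun h => ?_⟩
  obtain ⟨-, K, hK⟩ := h σ sel hstep
  exact hnl K (hK K le_rfl)
end
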